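/- Let (X,d,μ) be a space of homogeneous type, let p(·), q(·) ∈ 𝒫₁(X) satisfy 1/p(x) − 1/q(x) ≡ η for a constant η ∈ [0,1), and let ω be a weight on X. Then there is a constant C depending only on p(·), q(·) and η such that [ω]_{A_{q(·)}} ≤ C·[ω]_{A_{p(·),q(·)}}, where [ω]_{A_{q(·)}} := sup over balls B ⊆ X of μ(B)^{−1} ‖ω χ_B‖_{q(·)} ‖ω^{−1} χ_B‖_{q′(·)}. -/

import Mathlib

open MeasureTheory ENNReal Set Filter Topology

noncomputable section

variable {X : Type*}

/-- `d` is a quasi-metric on `X` with quasi-triangle constant `A0`. -/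
def IsQuasiMetric (d : X → X → ℝ) (A0 : ℝ) : Prop :=
  1 ≤ A0 ∧ (∀ x y, 0 ≤ d x y) ∧ (∀ x y, d x y = 0 ↔ x = y) ∧
    (∀ x y, d x y = d y x) ∧ ∀ x y z, d x y ≤ A0 * (d x z + d z y)

/-- The quasi-metric ball `B(c,r)`. -/
def qball (d : X → X → ℝ) (c : X) (r : ℝ) : Set X := {y | d c y < r}

/-- The measure `μ` is doubling (with constant `Cμ`) on quasi-metric balls:
`0 < μ(B(x,2r)) ≤ Cμ·μ(B(x,r)) < ∞`. -/
def IsDoubling [MeasurableSpace X] (d : X → X → ℝ) (μ : Measure X) (Cμ : ℝ≥0∞) : Prop :=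
  1 ≤ Cμ ∧ ∀ (x : X) (r : ℝ), 0 < r →
    0 < μ (qball d x (2 * r)) ∧ μ (qball d x (2 * r)) ≤ Cμ * μ (qball d x r) ∧
      Cμ * μ (qball d x r) < ∞

/-- The Luxemburg norm `‖f‖_{p(·)}` for a variable (possibly infinite) exponent `p`. -/
def luxNorm [MeasurableSpace X] (μ : Measure X) (p : X → ℝ≥0∞) (f : X → ℝ≥0∞) : ℝ≥0∞ :=
  sInf {lam : ℝ≥0∞ | 0 < lam ∧
    (∫⁻ x in {x | p x ≠ ∞}, (f x / lam) ^ (p x).toReal ∂μ) +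
      essSup (fun x => f x / lam) (μ.restrict {x | p x = ∞}) ≤ 1}

/-- The class `𝒫₁(X)`: exponents with values in `[1,∞)` and `p₊ < ∞`. -/
def MemP1 [MeasurableSpace X] (μ : Measure X) (p : X → ℝ≥0∞) : Prop :=
  Measurable p ∧ (∀ x, 1 ≤ p x) ∧ (∀ x, p x ≠ ∞) ∧ essSup p μ < ∞

/-- The class `𝒫(X)`: additionally `1 < p₋`. -/
def MemP [MeasurableSpace X] (μ : Measure X) (p : X → ℝ≥0∞) : Prop :=
  MemP1 μ p ∧ 1 < essInf p μ

/-- Local log-Hölder continuity `LH₀`. -/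
def MemLH0 (d : X → X → ℝ) (p : X → ℝ≥0∞) : Prop :=
  ∃ C0 : ℝ, 0 ≤ C0 ∧ ∀ x y, d x y < 1 / 2 →
    |(p x).toReal - (p y).toReal| ≤ C0 / Real.log (Real.exp 1 + 1 / d x y)

/-- Log-Hölder decay at infinity `LH_∞` with base point `x0` and limit value `pinf`. -/
def MemLHinf (d : X → X → ℝ) (x0 : X) (pinf : ℝ) (p : X → ℝ≥0∞) : Prop :=
  ∃ Cinf : ℝ, 0 ≤ Cinf ∧ ∀ x, |(p x).toReal - pinf| ≤ Cinf / Real.log (Real.exp 1 + d x x0)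

/-- Global log-Hölder continuity `LH = LH₀ ∩ LH_∞`. -/
def MemLH (d : X → X → ℝ) (p : X → ℝ≥0∞) : Prop :=
  MemLH0 d p ∧ ∃ x0 pinf, MemLHinf d x0 pinf p

/-- `w` is a weight: measurable, positive and finite a.e., and locally integrable. -/
def IsWeight [MeasurableSpace X] (d : X → X → ℝ) (μ : Measure X) (w : X → ℝ≥0∞) : Prop :=
  Measurable w ∧ (∀ᵐ x ∂μ, 0 < w x ∧ w x < ∞) ∧
    ∀ (c : X) (r : ℝ), 0 < r → ∫⁻ x in qball d c r, w x ∂μ < ∞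

/-- The pointwise conjugate exponent `p′(·)`, `1/p(x) + 1/p′(x) = 1`. -/
def conjExp (p : X → ℝ≥0∞) : X → ℝ≥0∞ := fun x => if p x = ∞ then 1 else p x / (p x - 1)

/-- The `A_{p(·),q(·)}` characteristic constant
`sup_B μ(B)^{η−1} ‖w χ_B‖_{q(·)} ‖w⁻¹ χ_B‖_{p′(·)}`. -/
def ApqConst [MeasurableSpace X] (d : X → X → ℝ) (μ : Measure X) (η : ℝ)
    (p q : X → ℝ≥0∞) (w : X → ℝ≥0∞) : ℝ≥0∞ :=
  ⨆ (c : X) (r : ℝ) (_ : 0 < r),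
    μ (qball d c r) ^ (η - 1) * luxNorm μ q ((qball d c r).indicator w) *
      luxNorm μ (conjExp p) ((qball d c r).indicator fun x => (w x)⁻¹)

/-- The fractional maximal operator `M_η`. -/
def fracMax [MeasurableSpace X] (d : X → X → ℝ) (μ : Measure X) (η : ℝ)
    (f : X → ℝ≥0∞) (x : X) : ℝ≥0∞ :=
  ⨆ (c : X) (r : ℝ) (_ : 0 < r) (_ : x ∈ qball d c r),
    μ (qball d c r) ^ (η - 1) * ∫⁻ y in qball d c r, f y ∂μ

/-- The Muckenhoupt `A₁` condition: `Mw ≤ C w` a.e. -/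
def MemA1 [MeasurableSpace X] (d : X → X → ℝ) (μ : Measure X) (w : X → ℝ≥0∞) : Prop :=
  ∃ C : ℝ≥0∞, C ≠ ∞ ∧ ∀ᵐ x ∂μ, fracMax d μ 0 w x ≤ C * w x

/-- The Muckenhoupt `A_p` condition for `1 < p < ∞`. -/
def MemAp [MeasurableSpace X] (d : X → X → ℝ) (μ : Measure X) (p : ℝ)
    (w : X → ℝ≥0∞) : Prop :=
  (⨆ (c : X) (r : ℝ) (_ : 0 < r),
    ((μ (qball d c r))⁻¹ * ∫⁻ x in qball d c r, w x ∂μ) *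
      ((μ (qball d c r))⁻¹ * ∫⁻ x in qball d c r, w x ^ (-(1 / (p - 1))) ∂μ) ^ (p - 1)) ≠ ∞

/-- The class `A_∞ = ⋃_{p ≥ 1} A_p`. -/
def MemAinfty [MeasurableSpace X] (d : X → X → ℝ) (μ : Measure X) (w : X → ℝ≥0∞) : Prop :=
  MemA1 d μ w ∨ ∃ p : ℝ, 1 < p ∧ MemAp d μ p w

/-!
On a ball `B` the conjugate exponents satisfy `1/q′ = 1/p′ + η`, so a Hölder-type inequality for
Luxemburg norms gives `‖ω⁻¹χ_B‖_{q′} ≲ ‖χ_B‖_{1/η} ‖ω⁻¹χ_B‖_{p′} = μ(B)^η ‖ω⁻¹χ_B‖_{p′}`, and the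
factor `μ(B)^η` turns `μ(B)^{-1}` into `μ(B)^{η-1}`. Pointwise, the Hölder step is the inequality
`a^{q′/p′} b^{ηq′} ≤ a + b` (the two weights sum to one) with `a = (f/λ)^{p′}` and
`b = (2μ(B))^{-1}`; where `p′ = ∞` the modular gives `f/λ ≤ 1` a.e. instead.
-/

namespace ENNReal

theorem rpow_mul_rpow_le_add (a b : ℝ≥0∞) {w₁ w₂ : ℝ} (h₁ : 0 ≤ w₁) (h₂ : 0 ≤ w₂)
    (hw : w₁ + w₂ = 1) : a ^ w₁ * b ^ w₂ ≤ a + b :=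
  calc a ^ w₁ * b ^ w₂ ≤ (a + b) ^ w₁ * (a + b) ^ w₂ :=
        mul_le_mul' (rpow_le_rpow le_self_add h₁) (rpow_le_rpow le_add_self h₂)
    _ = a + b := by rw [← rpow_add_of_nonneg _ _ h₁ h₂, hw, rpow_one]

theorem mul_rpow_le_rpow_add_rpow_inv (u v : ℝ≥0∞) {P Q η : ℝ} (hP : 0 < P) (hη : 0 < η)
    (hQ : Q⁻¹ = P⁻¹ + η) : (u * v) ^ Q ≤ u ^ P + v ^ η⁻¹ := by
  have hQ0 : 0 < Q := inv_pos.mp (by rw [hQ]; positivity)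
  calc (u * v) ^ Q = (u ^ P) ^ (Q / P) * (v ^ η⁻¹) ^ (Q * η) := by
        rw [mul_rpow_of_nonneg _ _ hQ0.le, ← rpow_mul, ← rpow_mul]
        congr 2 <;> field_simp
    _ ≤ u ^ P + v ^ η⁻¹ := by
        refine rpow_mul_rpow_le_add _ _ (by positivity) (by positivity) ?_
        rw [div_eq_mul_inv, ← mul_add, ← hQ, mul_inv_cancel₀ hQ0.ne']

/-- The constant `2 (2m)^η` is chosen so that both terms on the right are halves of what the
modulars of the two Luxemburg norms control. -/
theorem div_rpow_le_of_inv_eq_inv_add (u m : ℝ≥0∞) {P Q η : ℝ} (hP : 1 ≤ P) (hη : 0 < η)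
    (hQ : Q⁻¹ = P⁻¹ + η) : (u / (2 * (2 * m) ^ η)) ^ Q ≤ u ^ P * 2⁻¹ + (2 * m)⁻¹ := by
  have hsplit : u / (2 * (2 * m) ^ η) = u * 2⁻¹ * (2 * m) ^ (-η) := by
    rw [div_eq_mul_inv, ENNReal.mul_inv (by simp) (by simp), rpow_neg, mul_assoc]
  have hhalf : (u * 2⁻¹) ^ P ≤ u ^ P * 2⁻¹ := by
    rw [mul_rpow_of_nonneg _ _ (zero_le_one.trans hP)]
    gcongr
    exact rpow_le_self_of_le_one (by norm_num) hP
  calc (u / (2 * (2 * m) ^ η)) ^ Q ≤ (u * 2⁻¹) ^ P + ((2 * m) ^ (-η)) ^ η⁻¹ := by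
        rw [hsplit]
        exact mul_rpow_le_rpow_add_rpow_inv _ _ (by linarith) hη hQ
    _ ≤ u ^ P * 2⁻¹ + (2 * m)⁻¹ := by
        rw [← rpow_mul, neg_mul, mul_inv_cancel₀ hη.ne', rpow_neg_one]
        gcongr

theorem div_rpow_inv_le (u m : ℝ≥0∞) {η : ℝ} (hu : u ≤ 1) (hη : 0 < η) :
    (u / (2 * (2 * m) ^ η)) ^ η⁻¹ ≤ (2 * m)⁻¹ :=
  calc (u / (2 * (2 * m) ^ η)) ^ η⁻¹ ≤ ((2 * m) ^ η)⁻¹ ^ η⁻¹ := by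
        gcongr
        rw [div_eq_mul_inv, ENNReal.mul_inv (by simp) (by simp)]
        calc u * (2⁻¹ * ((2 * m) ^ η)⁻¹) ≤ 1 * (1 * ((2 * m) ^ η)⁻¹) := by
              gcongr; norm_num
          _ = ((2 * m) ^ η)⁻¹ := by simp
    _ = (2 * m)⁻¹ := by
        rw [← rpow_neg, ← rpow_mul, neg_mul, mul_inv_cancel₀ hη.ne', rpow_neg_one]

theorem toReal_inv_eq_inv_add {R S : ℝ≥0∞} {η : ℝ} (hR : R ≠ 0) (hη : 0 ≤ η)
    (h : S⁻¹ = R⁻¹ + ENNReal.ofReal η) : S.toReal⁻¹ = R.toReal⁻¹ + η := by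
  rw [← toReal_inv, h, toReal_add (inv_ne_top.mpr hR) ofReal_ne_top, toReal_inv,
    toReal_ofReal hη]

end ENNReal

section ConjugateExponent

variable {p q : X → ℝ≥0∞} {x : X}

theorem inv_conjExp (hp : 1 ≤ p x) : (conjExp p x)⁻¹ = 1 - (p x)⁻¹ := by
  unfold conjExp
  split_ifs with htop
  · simp [htop]
  rcases hp.eq_or_lt with h | h
  · simp [← h]
  have hsub : p x - 1 ≠ 0 := (tsub_pos_of_lt h).ne'
  have hp0 : p x ≠ 0 := (zero_lt_one.trans h).ne'
  rw [ENNReal.inv_div (Or.inr htop) (Or.inl hsub), ENNReal.sub_div (fun _ _ => hp0),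
    ENNReal.div_self hp0 htop, one_div]

theorem one_le_conjExp (hp : 1 ≤ p x) : 1 ≤ conjExp p x :=
  ENNReal.inv_le_one.mp (by rw [inv_conjExp hp]; exact tsub_le_self)

theorem inv_conjExp_eq_inv_add {a : ℝ≥0∞} (hp : 1 ≤ p x) (hpq : (p x)⁻¹ = (q x)⁻¹ + a) :
    (conjExp q x)⁻¹ = (conjExp p x)⁻¹ + a := by
  have hsum : (q x)⁻¹ + a ≤ 1 := hpq ▸ ENNReal.inv_le_one.mpr hp
  have hq : 1 ≤ q x := ENNReal.inv_le_one.mp (le_self_add.trans hsum)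
  have hq_inv : (q x)⁻¹ ≠ ∞ := ENNReal.inv_ne_top.mpr (zero_lt_one.trans_le hq).ne'
  rw [inv_conjExp hq, inv_conjExp hp, hpq, tsub_add_eq_tsub_tsub,
    tsub_add_cancel_of_le (ENNReal.le_sub_of_add_le_left hq_inv hsum)]

theorem measurable_conjExp [MeasurableSpace X] (hp : Measurable p) : Measurable (conjExp p) :=
  Measurable.ite (hp (measurableSet_singleton ∞)) measurable_const
    (hp.div (hp.sub measurable_const))

end ConjugateExponent

section Luxemburg

variable [MeasurableSpace X] {μ : Measure X}

/-- The modular `ρ_{p(·)}` whose unit ball has `luxNorm` as its gauge. -/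
def luxModular (μ : Measure X) (p f : X → ℝ≥0∞) : ℝ≥0∞ :=
  (∫⁻ x in {x | p x ≠ ∞}, f x ^ (p x).toReal ∂μ) + essSup f (μ.restrict {x | p x = ∞})

theorem luxModular_of_ne_top {s f : X → ℝ≥0∞} (hs : ∀ x, s x ≠ ∞) :
    luxModular μ s f = ∫⁻ x, f x ^ (s x).toReal ∂μ := by
  simp [luxModular, hs]

theorem ae_le_one_of_luxModular_le_one {r f : X → ℝ≥0∞} (hr : Measurable r)
    (h : luxModular μ r f ≤ 1) : ∀ᵐ x ∂μ, r x = ∞ → f x ≤ 1 := by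
  have hess : essSup f (μ.restrict {x | r x = ∞}) ≤ 1 := le_add_self.trans h
  exact (ae_restrict_iff' (hr (measurableSet_singleton ∞))).mp
    ((ae_le_essSup f).mono fun x hx => hx.trans hess)

theorem luxNorm_le_mul_of_luxModular_le_one {r s f : X → ℝ≥0∞} {c : ℝ≥0∞} (hc0 : c ≠ 0)
    (hc : c ≠ ∞) (h : ∀ lam, 0 < lam → luxModular μ r (fun x => f x / lam) ≤ 1 →
      luxModular μ s (fun x => f x / lam / c) ≤ 1) :
    luxNorm μ s f ≤ c * luxNorm μ r f := by
  rw [mul_comm, ← ENNReal.div_le_iff_le_mul (Or.inl hc0) (Or.inl hc)]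
  refine le_sInf fun lam ⟨hlam, hmod⟩ => ?_
  rw [ENNReal.div_le_iff_le_mul (Or.inl hc0) (Or.inl hc), mul_comm]
  refine sInf_le ⟨ENNReal.mul_pos hc0 hlam.ne', ?_⟩
  change luxModular μ s (fun x => f x / (c * lam)) ≤ 1
  convert h lam hlam hmod using 3 with x
  rw [div_eq_mul_inv, div_eq_mul_inv, div_eq_mul_inv, ENNReal.mul_inv (Or.inl hc0) (Or.inl hc),
    mul_comm c⁻¹, mul_assoc]

variable {r s : X → ℝ≥0∞} {η : ℝ} {B : Set X}

theorem rpow_le_indicator_add_indicator (hη : 0 < η) {x : X} (hr : 1 ≤ r x)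
    (hrs : (s x)⁻¹ = (r x)⁻¹ + ENNReal.ofReal η) {f : X → ℝ≥0∞} (hf : ∀ x ∉ B, f x = 0)
    (hx : r x = ∞ → f x ≤ 1) :
    (f x / (2 * (2 * μ B) ^ η)) ^ (s x).toReal ≤
      {y | r y ≠ ∞}.indicator (fun y => f y ^ (r y).toReal * 2⁻¹) x +
        (toMeasurable μ B).indicator (fun _ => (2 * μ B)⁻¹) x := by
  have hQ := ENNReal.toReal_inv_eq_inv_add (zero_lt_one.trans_le hr).ne' hη.le hrs
  by_cases hxB : x ∈ B
  swap
  · have hQ0 : 0 < (s x).toReal := inv_pos.mp (by rw [hQ]; positivity)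
    rw [hf x hxB, ENNReal.zero_div, ENNReal.zero_rpow_of_pos hQ0]
    exact zero_le
  rw [indicator_of_mem (subset_toMeasurable μ B hxB)]
  by_cases hrx : r x = ∞
  · have hQη : (s x).toReal = η⁻¹ := by
      rw [← inv_inv (s x).toReal, hQ, hrx]
      simp
    rw [hQη, indicator_of_notMem (by simpa using hrx), zero_add]
    exact ENNReal.div_rpow_inv_le _ _ (hx hrx) hη
  · rw [indicator_of_mem hrx]
    refine ENNReal.div_rpow_le_of_inv_eq_inv_add _ _ ?_ hη hQ
    simpa using ENNReal.toReal_mono hrx hr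

theorem luxModular_div_le_one_of_inv_eq_inv_add (hη : 0 < η) (hr1 : ∀ x, 1 ≤ r x)
    (hr : Measurable r) (hrs : ∀ x, (s x)⁻¹ = (r x)⁻¹ + ENNReal.ofReal η) (hB0 : μ B ≠ 0)
    (hB : μ B ≠ ∞) {f : X → ℝ≥0∞} (hf : ∀ x ∉ B, f x = 0) (hmod : luxModular μ r f ≤ 1) :
    luxModular μ s (fun x => f x / (2 * (2 * μ B) ^ η)) ≤ 1 := by
  have hs : ∀ x, s x ≠ ∞ := fun x => by
    rw [← ENNReal.inv_ne_zero, hrs]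
    simp [hη]
  have hint : ∫⁻ x in {x | r x ≠ ∞}, f x ^ (r x).toReal ∂μ ≤ 1 := le_self_add.trans hmod
  have hR : MeasurableSet {x | r x ≠ ∞} := (hr (measurableSet_singleton ∞)).compl
  rw [luxModular_of_ne_top hs]
  calc ∫⁻ x, (f x / (2 * (2 * μ B) ^ η)) ^ (s x).toReal ∂μ
      ≤ ∫⁻ x, {y | r y ≠ ∞}.indicator (fun y => f y ^ (r y).toReal * 2⁻¹) x +
          (toMeasurable μ B).indicator (fun _ => (2 * μ B)⁻¹) x ∂μ :=
        lintegral_mono_ae <| (ae_le_one_of_luxModular_le_one hr hmod).mono fun x hx =>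
          rpow_le_indicator_add_indicator hη (hr1 x) (hrs x) hf hx
    _ = (∫⁻ x in {y | r y ≠ ∞}, f x ^ (r x).toReal ∂μ) * 2⁻¹ + (2 * μ B)⁻¹ * μ B := by
        rw [lintegral_add_right _ (measurable_const.indicator (measurableSet_toMeasurable μ B)),
          lintegral_indicator hR,
          lintegral_mul_const' _ _ (by simp),
          lintegral_indicator_const (measurableSet_toMeasurable μ B), measure_toMeasurable]
    _ ≤ 1 * 2⁻¹ + 2⁻¹ := by
        rw [ENNReal.mul_inv (by simp) (by simp), mul_assoc, ENNReal.inv_mul_cancel hB0 hB,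
          mul_one]
        exact add_le_add_left (mul_le_mul_left hint _) _
    _ = 1 := by rw [one_mul, ENNReal.inv_two_add_inv_two]

theorem luxNorm_le_of_inv_eq_inv_add (hη : 0 < η) (hr1 : ∀ x, 1 ≤ r x) (hr : Measurable r)
    (hrs : ∀ x, (s x)⁻¹ = (r x)⁻¹ + ENNReal.ofReal η) (hB0 : μ B ≠ 0) (hB : μ B ≠ ∞)
    {f : X → ℝ≥0∞} (hf : ∀ x ∉ B, f x = 0) :
    luxNorm μ s f ≤ 2 * (2 * μ B) ^ η * luxNorm μ r f := by
  have h2B : 2 * μ B ≠ ∞ := ENNReal.mul_ne_top (by simp) hB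
  refine luxNorm_le_mul_of_luxModular_le_one ?_ ?_ fun lam _ hmod =>
    luxModular_div_le_one_of_inv_eq_inv_add hη hr1 hr hrs hB0 hB
      (fun x hx => by simp [hf x hx]) hmod
  · exact mul_ne_zero two_ne_zero (ENNReal.rpow_pos (ENNReal.mul_pos two_ne_zero hB0) h2B).ne'
  · exact ENNReal.mul_ne_top (by simp) (ENNReal.rpow_ne_top_of_nonneg hη.le h2B)

end Luxemburg

section Doubling

variable [MeasurableSpace X] {d : X → X → ℝ} {μ : Measure X} {Cμ : ℝ≥0∞}

theorem IsDoubling.measure_qball_ne_zero (h : IsDoubling d μ Cμ) (c : X) {r : ℝ} (hr : 0 < r) :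
    μ (qball d c r) ≠ 0 := by
  obtain ⟨hpos, hle, -⟩ := h.2 c r hr
  intro h0
  rw [h0, mul_zero] at hle
  exact hpos.ne' (le_antisymm hle zero_le)

theorem IsDoubling.measure_qball_ne_top (h : IsDoubling d μ Cμ) (c : X) {r : ℝ} (hr : 0 < r) :
    μ (qball d c r) ≠ ∞ :=
  ((le_mul_of_one_le_left zero_le h.1).trans_lt (h.2 c r hr).2.2).ne

end Doubling

theorem statement4_general {X : Type*} [MeasurableSpace X]
    (d : X → X → ℝ) (μ : Measure X) (Cμ : ℝ≥0∞)
    (hdbl : IsDoubling d μ Cμ)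
    (η : ℝ) (hη0 : 0 ≤ η)
    (p q : X → ℝ≥0∞) (hp : MemP1 μ p)
    (hpq : ∀ x, (p x)⁻¹ = (q x)⁻¹ + ENNReal.ofReal η)
    (ω : X → ℝ≥0∞) :
    ∃ C : ℝ≥0∞, C ≠ ∞ ∧ ApqConst d μ 0 q q ω ≤ C * ApqConst d μ η p q ω := by
  rcases hη0.eq_or_lt with rfl | hη
  · have hpq' : p = q := funext fun x => inv_inj.mp (by simpa using hpq x)
    exact ⟨1, one_ne_top, by rw [hpq', one_mul]⟩
  obtain ⟨hp_meas, hp1, -⟩ := hp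
  refine ⟨2 * 2 ^ η, mul_ne_top (by simp) (rpow_ne_top_of_nonneg hη.le (by simp)), ?_⟩
  refine iSup_le fun c => iSup_le fun r => iSup_le fun hr => ?_
  set B := qball d c r
  have hB0 := hdbl.measure_qball_ne_zero c hr
  have hB := hdbl.measure_qball_ne_top c hr
  have hdual := luxNorm_le_of_inv_eq_inv_add hη (fun x => one_le_conjExp (hp1 x))
    (measurable_conjExp hp_meas) (fun x => inv_conjExp_eq_inv_add (hp1 x) (hpq x)) hB0 hB
    (f := B.indicator fun x => (ω x)⁻¹) (fun x hx => indicator_of_notMem hx _)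
  calc μ B ^ ((0 : ℝ) - 1) * luxNorm μ q (B.indicator ω) *
        luxNorm μ (conjExp q) (B.indicator fun x => (ω x)⁻¹)
      ≤ μ B ^ ((0 : ℝ) - 1) * luxNorm μ q (B.indicator ω) *
        (2 * (2 * μ B) ^ η * luxNorm μ (conjExp p) (B.indicator fun x => (ω x)⁻¹)) :=
        mul_le_mul_right hdual _
    _ = 2 * 2 ^ η * (μ B ^ (η - 1) * luxNorm μ q (B.indicator ω) *
        luxNorm μ (conjExp p) (B.indicator fun x => (ω x)⁻¹)) := by
        rw [mul_rpow_of_nonneg _ _ hη.le, show η - 1 = 0 - 1 + η by ring,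
          rpow_add _ _ hB0 hB]
        ring
    _ ≤ 2 * 2 ^ η * ApqConst d μ η p q ω := by
        gcongr
        exact le_iSup_of_le c (le_iSup_of_le r (le_iSup_of_le hr le_rfl))

/-- `[ω]_{A_{q(·)}} ≤ C·[ω]_{A_{p(·),q(·)}}`. -/
theorem statement4 {X : Type*} [MeasurableSpace X]
    (d : X → X → ℝ) (A0 : ℝ) (μ : Measure X) (Cμ : ℝ≥0∞)
    (hd : IsQuasiMetric d A0)
    (hball : ∀ (c : X) (r : ℝ), MeasurableSet (qball d c r))
    (hdbl : IsDoubling d μ Cμ)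
    (η : ℝ) (hη0 : 0 ≤ η) (hη1 : η < 1)
    (p q : X → ℝ≥0∞) (hp : MemP1 μ p) (hq : MemP1 μ q)
    (hpq : ∀ x, (p x)⁻¹ = (q x)⁻¹ + ENNReal.ofReal η)
    (ω : X → ℝ≥0∞) (hω : IsWeight d μ ω) :
    ∃ C : ℝ≥0∞, C ≠ ∞ ∧ ApqConst d μ 0 q q ω ≤ C * ApqConst d μ η p q ω :=
  statement4_general d μ Cμ hdbl η hη0 p q hp hpq ω

end
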